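/- For a positive integer N and parameters a, b, the balanced hypergeometric series identity ₄F₃[−N/2, 1/2−N/2, −a, a+b; 1−N, b/2, 1/2+b/2; 1] = (a+b)_N/(b)_N + (−a)_N/(b)_N holds (Andrews–Burge summation). Equivalently, as a terminating sum: Σ_{k≥0} (−N/2)_k (1/2−N/2)_k (−a)_k (a+b)_k / (k! (1−N)_k (b/2)_k (1/2+b/2)_k) = ((a+b)_N + (−a)_N)/(b)_N. -/

import Mathlib

/-!
By the duplication formula `4 ^ k (x/2)_k ((x+1)/2)_k = (x)_{2k}` and
`(b)_N = (b)_{2k} (b+2k)_{N-2k}`, the `k`-th term equals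
`c(N,k) (x)_k (y)_k (x+y+2k)_{N-2k} / (x+y)_N` with `x = -a`, `y = a + b`, where
`c(N,k) = (-N)_{2k} / (k! (1-N)_k)` is the coefficient of `(xy)^k (x+y)^{N-2k}` in Waring's
formula for `x^N + y^N`. The theorem is thus the rising-factorial Waring formula
`(x)_N + (y)_N = ∑ₖ c(N,k) (x)_k (y)_k (x+y+2k)_{N-2k}`. Both sides satisfy
`S_{N+2}(x,y) = (x+y+N+1) S_{N+1}(x,y) - xy S_N(x+1,y+1)`: the right side because the coefficients
obey the Lucas-triangle rule `c(N+2,k+1) = c(N+1,k+1) - c(N,k)`, the left side because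
`(x)_{N+2} = x (x+1)_N (x+N+1)`. They agree for `N = 1, 2`.
-/

open Finset

noncomputable section

/-- rising factorial -/
def rf {R : Type*} [CommRing R] (a : R) (k : ℕ) : R := ∏ i ∈ Finset.range k, (a + i)

open scoped Nat

section Rising

variable {R : Type*} [CommRing R]

theorem rf_zero (x : R) : rf x 0 = 1 := prod_range_zero _

theorem rf_succ (x : R) (n : ℕ) : rf x (n + 1) = rf x n * (x + n) := prod_range_succ _ _

theorem rf_succ' (x : R) (n : ℕ) : rf x (n + 1) = x * rf (x + 1) n := by
  simp only [rf, prod_range_succ', Nat.cast_zero, add_zero, Nat.cast_succ, add_assoc,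
    add_comm (1 : R)]
  ring

theorem rf_add (x : R) (m n : ℕ) : rf x (m + n) = rf x m * rf (x + m) n := by
  simp only [rf, prod_range_add, Nat.cast_add, add_assoc]

theorem rf_neg_natCast_eq_zero {n m : ℕ} (h : n < m) : rf (-(n : R)) m = 0 :=
  prod_eq_zero (mem_range.2 h) (neg_add_cancel _)

def risingMonomial (N : ℕ) (x y : R) (k : ℕ) : R :=
  rf x k * rf y k * rf (x + y + 2 * k) (N - 2 * k)

theorem risingMonomial_succ {N k : ℕ} (h : 2 * k ≤ N) (x y : R) :
    risingMonomial (N + 1) x y k = (x + y + N) * risingMonomial N x y k := by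
  rw [risingMonomial, risingMonomial, Nat.sub_add_comm h, rf_succ, Nat.cast_sub h]
  push_cast; ring

theorem risingMonomial_add_two_succ (N k : ℕ) (x y : R) :
    risingMonomial (N + 2) x y (k + 1) = x * y * risingMonomial N (x + 1) (y + 1) k := by
  rw [risingMonomial, risingMonomial, rf_succ', rf_succ',
    show N + 2 - 2 * (k + 1) = N - 2 * k by omega,
    show x + y + 2 * ((k + 1 : ℕ) : R) = x + 1 + (y + 1) + 2 * k by push_cast; ring]
  ring

end Rising

section Field

variable {K : Type*} [Field K]

theorem rf_ne_zero_iff {x : K} {k : ℕ} : rf x k ≠ 0 ↔ ∀ i < k, x + i ≠ 0 := by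
  simp only [rf, prod_ne_zero_iff, mem_range]

theorem rf_two_mul [NeZero (2 : K)] (x : K) (k : ℕ) :
    rf x (2 * k) = 4 ^ k * rf (x / 2) k * rf ((x + 1) / 2) k := by
  induction k with
  | zero => simp [rf_zero]
  | succ k ih =>
    rw [show 2 * (k + 1) = 2 * k + 1 + 1 by ring, rf_succ, rf_succ, ih, rf_succ, rf_succ]
    field_simp
    push_cast
    ring

theorem rf_one_sub_natCast_ne_zero [CharZero K] {N k : ℕ} (h : k < N) :
    rf (1 - (N : K)) k ≠ 0 := by
  refine rf_ne_zero_iff.2 fun i hi => ?_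
  rw [sub_add_eq_add_sub, sub_ne_zero]
  exact_mod_cast (by omega : 1 + i ≠ N)

end Field

section Waring

variable {K : Type*} [Field K]

variable (K) in
/-- For `2 * k ≤ N` this is `(-1) ^ k * N / (N - k) * (N - k).choose k`; it vanishes for
`N < 2 * k` (for `N ≤ k` also through `x / 0 = 0`). -/
def waringCoeff (N k : ℕ) : K := rf (-(N : K)) (2 * k) / (k ! * rf (1 - (N : K)) k)

def risingWaringSum (N : ℕ) (x y : K) : K :=
  ∑ k ∈ range (N / 2 + 1), waringCoeff K N k * risingMonomial N x y k

theorem waringCoeff_zero_right (N : ℕ) : waringCoeff K N 0 = 1 := by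
  simp [waringCoeff, rf_zero]

theorem waringCoeff_eq_zero {N k : ℕ} (h : N < 2 * k) : waringCoeff K N k = 0 := by
  rw [waringCoeff, rf_neg_natCast_eq_zero h, zero_div]

theorem waringCoeff_add_two_succ [CharZero K] {M : ℕ} (hM : 1 ≤ M) (k : ℕ) :
    waringCoeff K (M + 2) (k + 1) = waringCoeff K (M + 1) (k + 1) - waringCoeff K M k := by
  rcases lt_or_ge M (2 * k) with h | h
  · rw [waringCoeff_eq_zero h, waringCoeff_eq_zero (by omega), waringCoeff_eq_zero (by omega),
      sub_zero]
  have hkM : k < M := by omega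
  have hk : (k : K) - M ≠ 0 := sub_ne_zero.2 (by exact_mod_cast hkM.ne)
  have hM0 : (M : K) ≠ 0 := by exact_mod_cast (by omega : M ≠ 0)
  have hR := rf_one_sub_natCast_ne_zero (K := K) hkM
  have hF : (k ! : K) ≠ 0 := by exact_mod_cast k.factorial_ne_zero
  have e1 : rf (-((M + 2 : ℕ) : K)) (2 * (k + 1))
      = (M + 2) * (M + 1) * rf (-(M : K)) (2 * k) := by
    rw [show 2 * (k + 1) = 2 * k + 1 + 1 by ring, rf_succ', rf_succ',
      show -((M + 2 : ℕ) : K) + 1 + 1 = -M by push_cast; ring]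
    push_cast; ring
  have e2 : rf (-((M + 1 : ℕ) : K)) (2 * (k + 1))
      = (M + 1) * (M - 2 * k) * rf (-(M : K)) (2 * k) := by
    rw [show 2 * (k + 1) = 2 * k + 1 + 1 by ring, rf_succ, rf_succ',
      show -((M + 1 : ℕ) : K) + 1 = -M by push_cast; ring]
    push_cast; ring
  have e3 : rf (1 - ((M + 2 : ℕ) : K)) (k + 1) = -(M + 1) * rf (-(M : K)) k := by
    rw [rf_succ', show (1 : K) - ((M + 2 : ℕ) : K) + 1 = -M by push_cast; ring]
    push_cast; ring
  have e4 : rf (1 - ((M + 1 : ℕ) : K)) (k + 1) = rf (-(M : K)) k * (k - M) := by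
    rw [rf_succ, show (1 : K) - ((M + 1 : ℕ) : K) = -M by push_cast; ring]
    ring
  have e5 : rf (-(M : K)) k * (k - M) = -M * rf (1 - (M : K)) k := by
    rw [← e4, rf_succ', show (1 : K) - ((M + 1 : ℕ) : K) = -M by push_cast; ring,
      neg_add_eq_sub]
  have hP : rf (-(M : K)) k = -M * rf (1 - (M : K)) k / (k - M) := by
    rw [← e5, mul_div_cancel_right₀ _ hk]
  simp only [waringCoeff, e1, e2, e3, e4, hP, Nat.factorial_succ]
  push_cast
  field_simp
  ring

theorem sum_range_eq_sum_range_div_two_succ {M : Type*} [AddCommMonoid M] {f : ℕ → M}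
    {N m : ℕ} (hf : ∀ k, N < 2 * k → f k = 0) (hm : N < 2 * m) :
    ∑ k ∈ range m, f k = ∑ k ∈ range (N / 2 + 1), f k := by
  have hvanish : ∀ k, N / 2 + 1 ≤ k → f k = 0 := fun k hk => hf k (by omega)
  rcases le_total m (N / 2 + 1) with h | h
  · refine sum_subset (range_subset_range.2 h) fun k hk hkm => hvanish k ?_
    simp only [mem_range, not_lt] at hk hkm
    omega
  · exact (sum_subset (range_subset_range.2 h) fun k _ hk => hvanish k (by simpa using hk)).symm

theorem risingWaringSum_add_two [CharZero K] {N : ℕ} (hN : 1 ≤ N) (x y : K) :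
    risingWaringSum (N + 2) x y
      = (x + y + (N + 1)) * risingWaringSum (N + 1) x y
        - x * y * risingWaringSum N (x + 1) (y + 1) := by
  have hshift : ∀ k, waringCoeff K (N + 1) k * risingMonomial (N + 2) x y k
      = (x + y + (N + 1)) * (waringCoeff K (N + 1) k * risingMonomial (N + 1) x y k) := by
    intro k
    rcases lt_or_ge (N + 1) (2 * k) with h | h
    · simp [waringCoeff_eq_zero h]
    · rw [risingMonomial_succ h]; push_cast; ring
  calc risingWaringSum (N + 2) x y
      = ∑ k ∈ range (N / 2 + 1),
            waringCoeff K (N + 2) (k + 1) * risingMonomial (N + 2) x y (k + 1)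
        + waringCoeff K (N + 2) 0 * risingMonomial (N + 2) x y 0 := by
        rw [risingWaringSum, show (N + 2) / 2 = N / 2 + 1 by omega, sum_range_succ']
    _ = ∑ k ∈ range (N / 2 + 2), waringCoeff K (N + 1) k * risingMonomial (N + 2) x y k
        - x * y * risingWaringSum N (x + 1) (y + 1) := by
        have hsecond : ∑ k ∈ range (N / 2 + 1),
              waringCoeff K N k * risingMonomial (N + 2) x y (k + 1)
            = x * y * risingWaringSum N (x + 1) (y + 1) := by
          rw [risingWaringSum, mul_sum]
          exact sum_congr rfl fun k _ => by rw [risingMonomial_add_two_succ]; ring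
        rw [sum_range_succ' _ (N / 2 + 1), waringCoeff_zero_right, waringCoeff_zero_right,
          ← hsecond]
        simp only [waringCoeff_add_two_succ hN, sub_mul, sum_sub_distrib]
        ring
    _ = _ := by
        rw [sum_congr rfl fun k _ => hshift k, ← mul_sum, risingWaringSum,
          sum_range_eq_sum_range_div_two_succ (N := N + 1) (fun k hk => by
            simp [waringCoeff_eq_zero hk]) (by omega)]
        rfl

theorem risingWaringSum_eq [CharZero K] {N : ℕ} (hN : 1 ≤ N) (x y : K) :
    risingWaringSum N x y = rf x N + rf y N := by
  induction N using Nat.strong_induction_on generalizing x y with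
  | _ N ih =>
    match N, hN with
    | 1, _ => simp [risingWaringSum, waringCoeff, risingMonomial, rf]
    | 2, _ =>
      simp [risingWaringSum, waringCoeff, risingMonomial, rf, sum_range_succ, prod_range_succ]
      ring
    | M + 3, _ =>
      rw [risingWaringSum_add_two (by omega), ih (M + 2) (by omega) (by omega),
        ih (M + 1) (by omega) (by omega)]
      rw [show M + 3 = M + 2 + 1 by ring, rf_succ' x, rf_succ' x, rf_succ' y, rf_succ' y,
        rf_succ (x + 1) (M + 1), rf_succ (y + 1) (M + 1)]
      push_cast
      ring

end Waring

theorem andrewsBurge_term_eq {K : Type*} [Field K] [CharZero K] {N k : ℕ} (hk : 2 * k ≤ N)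
    (a b : K) (hb : rf b N ≠ 0) :
    rf (-(N : K) / 2) k * rf (1 / 2 - (N : K) / 2) k * rf (-a) k * rf (a + b) k
        / ((k ! : K) * rf (1 - (N : K)) k * rf (b / 2) k * rf (1 / 2 + b / 2) k)
      = waringCoeff K N k * risingMonomial N (-a) (a + b) k / rf b N := by
  have hsplit : rf b N = rf b (2 * k) * rf (b + 2 * k) (N - 2 * k) := by
    have := rf_add b (2 * k) (N - 2 * k)
    rwa [Nat.add_sub_cancel' hk, Nat.cast_mul, Nat.cast_ofNat] at this
  have hb2k : rf b (2 * k) ≠ 0 := left_ne_zero_of_mul (hsplit ▸ hb)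
  have hbtail : rf (b + 2 * k) (N - 2 * k) ≠ 0 := right_ne_zero_of_mul (hsplit ▸ hb)
  have hnum :
      rf (-(N : K) / 2) k * rf (1 / 2 - (N : K) / 2) k = rf (-(N : K)) (2 * k) / 4 ^ k := by
    rw [rf_two_mul, show (-(N : K) + 1) / 2 = 1 / 2 - N / 2 by ring]
    field_simp
  have hden : rf (b / 2) k * rf (1 / 2 + b / 2) k = rf b (2 * k) / 4 ^ k := by
    rw [rf_two_mul, show (b + 1) / 2 = 1 / 2 + b / 2 by ring]
    field_simp
  rw [waringCoeff, risingMonomial, neg_add_cancel_left, hsplit]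
  calc _ = (rf (-(N : K) / 2) k * rf (1 / 2 - (N : K) / 2) k) * (rf (-a) k * rf (a + b) k)
          / ((k ! : K) * rf (1 - (N : K)) k * (rf (b / 2) k * rf (1 / 2 + b / 2) k)) := by ring
    _ = _ := by rw [hnum, hden]; field_simp

theorem stmt2 (N : ℕ) (hN : 0 < N) (a b : ℝ)
    (hb : rf b N ≠ 0) :
    ∑ k ∈ Finset.range (N / 2 + 1),
      rf (-(N : ℝ) / 2) k * rf (1 / 2 - (N : ℝ) / 2) k * rf (-a) k * rf (a + b) k
        / ((Nat.factorial k : ℝ) * rf (1 - (N : ℝ)) k * rf (b / 2) k * rf (1 / 2 + b / 2) k)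
    = (rf (a + b) N + rf (-a) N) / rf b N := by
  rw [sum_congr rfl fun k hk => andrewsBurge_term_eq (by have := mem_range.1 hk; omega) a b hb,
    ← sum_div, ← risingWaringSum, risingWaringSum_eq hN, add_comm]
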